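/- Let A be a finite arrangement of affine hyperplanes in a finite-dimensional vector space V over a field, let H ∈ A, let A' = A ∖ {H} be the deletion, and let A'' = {H ∩ K : K ∈ A', H ∩ K ≠ ∅} be the restriction, an arrangement of hyperplanes in the affine space H. Then the Poincaré polynomials satisfy π(A,t) = π(A',t) + t·π(A'',t). -/

import Mathlib

open scoped Classical

noncomputable section

variable (K : Type) [Field K] {V : Type} [AddCommGroup V] [Module K V]

/-- An affine hyperplane in `V`: the level set of a nonzero linear functional. -/
def IsHyperplane (H : Set V) : Prop :=
  ∃ (f : V →ₗ[K] K) (c : K), f ≠ 0 ∧ H = {x | f x = c}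

/-- The dimension of a subset of `V`: the dimension of its affine span. -/
def flatDim (X : Set V) : ℕ := Module.finrank K (affineSpan K X).direction

/-- The intersection poset `L(A)` of the arrangement `A` inside the ambient set `W`:
all nonempty intersections of subfamilies of `A` (intersected with the ambient `W`),
the empty subfamily giving `W` itself. -/
def interPosetIn (W : Set V) (A : Finset (Set V)) : Finset (Set V) :=
  (A.powerset.image fun S => W ∩ ⋂ H ∈ S, H).filter fun X => X.Nonempty

/-- The rank of `X`: its codimension within the ambient space `W`. -/
def rkIn (W X : Set V) : ℕ := flatDim K W - flatDim K X

/-- `μ` satisfies the defining recursion of the Möbius function of the poset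
`L(A)` inside the ambient set `W`.  `L(A)` is ordered by reverse inclusion, so the
condition `μ(W) = 1`, `μ(X) = -∑_{Y < X} μ(Y)` for `X > W` is equivalent to:
for every `X ∈ L(A)`, `∑_{Y ⊇ X} μ(Y)` is `1` if `X = W` and `0` otherwise. -/
def IsMobiusIn (W : Set V) (A : Finset (Set V)) (μ : Set V → ℤ) : Prop :=
  ∀ X ∈ interPosetIn W A,
    (∑ Y ∈ (interPosetIn W A).filter fun Y => X ⊆ Y, μ Y) = if X = W then 1 else 0

/-- The Poincaré polynomial `π(A,t) = ∑_{X ∈ L(A)} μ(X) (-t)^{r(X)}`. -/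
def poinIn (W : Set V) (A : Finset (Set V)) (μ : Set V → ℤ) : Polynomial ℤ :=
  ∑ X ∈ interPosetIn W A, Polynomial.C (μ X) * (- Polynomial.X) ^ (rkIn K W X)

/-- A chamber of the arrangement `A` within the ambient set `W`: a connected
component of `W ∖ ⋃_{H ∈ A} H`. -/
def IsChamberIn [TopologicalSpace V] (W : Set V) (A : Finset (Set V)) (C : Set V) : Prop :=
  ∃ x ∈ W ∩ (⋃ H ∈ A, (H : Set V))ᶜ, C = connectedComponentIn (W ∩ (⋃ H ∈ A, (H : Set V))ᶜ) x

/-- `F` is a generic (transversal) `q`-dimensional affine subspace for the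
arrangement `A`: it is (the carrier of) an affine subspace of dimension `q`, and
for every `X ∈ L(A)`, if `r(X) ≤ q` then `F ∩ X` is nonempty of dimension
`q - r(X)`, and if `r(X) > q` then `F ∩ X = ∅`. -/
def IsGenericFlat (q : ℕ) (A : Finset (Set V)) (F : Set V) : Prop :=
  (∃ W : AffineSubspace K V, (W : Set V) = F) ∧ F.Nonempty ∧ flatDim K F = q ∧
  ∀ X ∈ interPosetIn Set.univ A,
    (rkIn K Set.univ X ≤ q → (F ∩ X).Nonempty ∧ flatDim K (F ∩ X) = q - rkIn K Set.univ X) ∧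
    (q < rkIn K Set.univ X → F ∩ X = ∅)

end

/-!
Whitney's formula: as no member of the arrangement contains the ambient space `W`, the Möbius
function of `L(A)` is `μ(X) = ∑_{S ⊆ A, W ∩ ⋂ S = X} (-1)^|S|`, hence
`π(A,t) = ∑_{S ⊆ A, W ∩ ⋂ S ≠ ∅} (-1)^|S| (-t)^{r(W ∩ ⋂ S)}`.
Split the subfamilies of `A = {H} ∪ A'` according to whether they contain `H`. Those that do not
give `π(A',t)`. Those of the form `{H} ∪ T` with `T ⊆ A'` cut out `H ∩ ⋂ T`, whose rank in `V` is
one more than its rank in `H`, and `L(A'')` is the intersection poset of `A'` inside `H`; so they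
give `t·π(A'',t)`.
-/

open Finset

section Intersections

variable {V : Type}

def interIn (W : Set V) (S : Finset (Set V)) : Set V := W ∩ ⋂ H ∈ S, H

lemma subset_interIn_iff {W X : Set V} {S : Finset (Set V)} :
    X ⊆ interIn W S ↔ X ⊆ W ∧ ∀ K ∈ S, X ⊆ K := by
  simp [interIn, Set.subset_iInter_iff]

lemma interIn_subset (W : Set V) (S : Finset (Set V)) : interIn W S ⊆ W :=
  Set.inter_subset_left

lemma interIn_subset_of_mem {W K : Set V} {S : Finset (Set V)} (hK : K ∈ S) :
    interIn W S ⊆ K :=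
  (subset_interIn_iff.1 subset_rfl).2 K hK

lemma interIn_univ_insert (H : Set V) (S : Finset (Set V)) :
    interIn Set.univ (insert H S) = interIn H S := by
  ext; simp [interIn]

lemma interIn_image_inter (H : Set V) (S : Finset (Set V)) :
    interIn H (S.image (H ∩ ·)) = interIn H S := by
  ext x; simp +contextual [interIn]

lemma mem_interPosetIn {W X : Set V} {B : Finset (Set V)} :
    X ∈ interPosetIn W B ↔ (∃ S ⊆ B, interIn W S = X) ∧ X.Nonempty := by
  simp [interPosetIn, interIn]

lemma IsMobiusIn.eqOn {W : Set V} {B : Finset (Set V)} {μ ν : Set V → ℤ}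
    (hμ : IsMobiusIn W B μ) (hν : IsMobiusIn W B ν) : Set.EqOn μ ν (interPosetIn W B) := by
  intro X hX
  refine (interPosetIn W B : Set (Set V)).toFinite.wellFoundedOn (r := (· ⊃ ·)).induction hX
    (P := fun X => μ X = ν X) fun X hX ih => ?_
  have hXX : X ∈ (interPosetIn W B).filter (X ⊆ ·) := mem_filter.2 ⟨hX, subset_rfl⟩
  have key := (hμ X hX).trans (hν X hX).symm
  rw [← add_sum_erase _ _ hXX, ← add_sum_erase _ _ hXX] at key
  rw [sum_congr rfl fun Y hY => ?_] at key
  · exact add_right_cancel key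
  obtain ⟨hYX, hY, hXY⟩ := by simpa using hY
  exact ih Y hY (hXY.ssubset_of_ne (Ne.symm hYX))

noncomputable def whitneyMu (W : Set V) (B : Finset (Set V)) (X : Set V) : ℤ :=
  ∑ S ∈ B.powerset with interIn W S = X, (-1) ^ #S

lemma isMobiusIn_whitneyMu {W : Set V} {B : Finset (Set V)} (hW : ∀ K ∈ B, ¬ W ⊆ K) :
    IsMobiusIn W B (whitneyMu W B) := by
  intro X hX
  obtain ⟨⟨S₀, hS₀, rfl⟩, hne⟩ := mem_interPosetIn.1 hX
  -- The flats above `X` come from exactly the subfamilies of `{K ∈ B | X ⊆ K}`, and the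
  -- alternating sum over a powerset vanishes unless it is the powerset of `∅`.
  have hfibres : {S ∈ B.powerset | interIn W S ∈ (interPosetIn W B).filter (interIn W S₀ ⊆ ·)}
      = (B.filter (interIn W S₀ ⊆ ·)).powerset := by
    ext S
    simp only [mem_filter, mem_powerset, subset_iff (s₂ := B.filter _), mem_filter,
      mem_interPosetIn, subset_interIn_iff]
    refine ⟨fun ⟨hSB, _, _, hS₀S⟩ K hK => ⟨hSB hK, hS₀S K hK⟩, fun h => ?_⟩
    have hSB : S ⊆ B := fun K hK => (h hK).1
    have hS₀S : interIn W S₀ ⊆ interIn W S :=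
      subset_interIn_iff.2 ⟨interIn_subset W S₀, fun K hK => (h hK).2⟩
    exact ⟨hSB, ⟨⟨S, hSB, rfl⟩, hne.mono hS₀S⟩, interIn_subset W S₀, fun K hK => (h hK).2⟩
  have hempty : B.filter (interIn W S₀ ⊆ ·) = ∅ ↔ interIn W S₀ = W := by
    rw [filter_eq_empty_iff]
    refine ⟨fun h => ?_, fun h K hK => by rw [h]; exact hW K hK⟩
    have : S₀ = ∅ := subset_empty.1 fun K hK => (h (hS₀ hK) (interIn_subset_of_mem hK)).elim
    simp [this, interIn]
  unfold whitneyMu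
  rw [sum_fiberwise_eq_sum_filter, hfibres, sum_powerset_neg_one_pow_card]
  simp only [hempty]

lemma interPosetIn_restrict (H : Set V) (B : Finset (Set V)) :
    interPosetIn H ((B.image fun K => H ∩ K).filter fun Y => Y.Nonempty)
      = interPosetIn H B := by
  ext X
  simp only [mem_interPosetIn, and_congr_left_iff]
  intro hX
  constructor
  · rintro ⟨S, hS, rfl⟩
    obtain ⟨S', hS', rfl⟩ := subset_image_iff.1 (hS.trans (filter_subset _ _))
    exact ⟨S', hS', (interIn_image_inter H S').symm⟩
  · rintro ⟨S, hS, rfl⟩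
    refine ⟨S.image (H ∩ ·), fun Y hY => ?_, interIn_image_inter H S⟩
    obtain ⟨K, hK, rfl⟩ := mem_image.1 hY
    refine mem_filter.2 ⟨mem_image_of_mem _ (hS hK), hX.mono ?_⟩
    exact Set.subset_inter (interIn_subset H S) (interIn_subset_of_mem hK)

lemma isMobiusIn_restrict_iff {H : Set V} {B : Finset (Set V)} {μ : Set V → ℤ} :
    IsMobiusIn H ((B.image fun K => H ∩ K).filter fun Y => Y.Nonempty) μ
      ↔ IsMobiusIn H B μ := by
  simp only [IsMobiusIn, interPosetIn_restrict]

end Intersections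

section Hyperplanes

variable {K : Type} [Field K] {V : Type} [AddCommGroup V] [Module K V]

lemma IsHyperplane.exists_affineSubspace [FiniteDimensional K V] {H : Set V}
    (hH : IsHyperplane K H) :
    ∃ E : AffineSubspace K V, (E : Set V) = H ∧ (E : Set V).Nonempty ∧
      Module.finrank K E.direction + 1 = Module.finrank K V := by
  obtain ⟨f, c, hf, rfl⟩ := hH
  obtain ⟨x₀, hx₀⟩ := LinearMap.surjective hf c
  refine ⟨AffineSubspace.mk' x₀ (LinearMap.ker f), ?_, ⟨x₀, AffineSubspace.self_mem_mk' _ _⟩, ?_⟩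
  · ext x
    simp [AffineSubspace.mem_mk', hx₀, sub_eq_zero]
  · rw [AffineSubspace.direction_mk']
    exact Module.Dual.finrank_ker_add_one_of_ne_zero hf

lemma flatDim_coe (E : AffineSubspace K V) :
    flatDim K (E : Set V) = Module.finrank K E.direction := by
  rw [flatDim, AffineSubspace.affineSpan_coe]

lemma flatDim_univ : flatDim K (Set.univ : Set V) = Module.finrank K V := by
  rw [← AffineSubspace.top_coe K V, flatDim_coe, AffineSubspace.direction_top, finrank_top]

lemma flatDim_mono [FiniteDimensional K V] {X Y : Set V} (h : X ⊆ Y) :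
    flatDim K X ≤ flatDim K Y :=
  Submodule.finrank_mono (AffineSubspace.direction_le (affineSpan_mono K h))

lemma IsHyperplane.flatDim_add_one [FiniteDimensional K V] {H : Set V}
    (hH : IsHyperplane K H) :
    flatDim K H + 1 = Module.finrank K V := by
  obtain ⟨E, rfl, -, hE⟩ := hH.exists_affineSubspace
  rwa [flatDim_coe]

lemma IsHyperplane.not_univ_subset [FiniteDimensional K V] {H : Set V}
    (hH : IsHyperplane K H) :
    ¬ Set.univ ⊆ H := fun h => by
  have := flatDim_mono (K := K) h
  have := hH.flatDim_add_one
  rw [flatDim_univ] at *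
  omega

lemma IsHyperplane.eq_of_subset [FiniteDimensional K V] {H H' : Set V}
    (hH : IsHyperplane K H) (hH' : IsHyperplane K H') (h : H ⊆ H') : H = H' := by
  obtain ⟨E, rfl, hne, hE⟩ := hH.exists_affineSubspace
  obtain ⟨E', rfl, -, hE'⟩ := hH'.exists_affineSubspace
  have hle : E ≤ E' := h
  have hdir : E.direction = E'.direction :=
    Submodule.eq_of_le_of_finrank_eq (AffineSubspace.direction_le hle) (by omega)
  rw [AffineSubspace.eq_of_direction_eq_of_nonempty_of_le hdir hne hle]

lemma rkIn_univ_of_subset [FiniteDimensional K V] {H Y : Set V} (hH : IsHyperplane K H)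
    (hY : Y ⊆ H) :
    rkIn K Set.univ Y = rkIn K H Y + 1 := by
  have := flatDim_mono (K := K) hY
  have := hH.flatDim_add_one
  rw [rkIn, rkIn, flatDim_univ]
  omega

end Hyperplanes

section Poincare

open Polynomial

variable (K : Type) [Field K] {V : Type} [AddCommGroup V] [Module K V]

noncomputable def whitneyTerm (W : Set V) (S : Finset (Set V)) : ℤ[X] :=
  if (interIn W S).Nonempty then C ((-1) ^ #S) * (-X) ^ rkIn K W (interIn W S) else 0

lemma poinIn_whitneyMu (W : Set V) (B : Finset (Set V)) :
    poinIn K W B (whitneyMu W B) = ∑ S ∈ B.powerset, whitneyTerm K W S := by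
  have hfibre : ∀ Y ∈ interPosetIn W B,
      C (whitneyMu W B Y) * (-X) ^ rkIn K W Y
        = ∑ S ∈ B.powerset with interIn W S = Y,
            C ((-1) ^ #S) * (-X) ^ rkIn K W (interIn W S) := by
    intro Y _
    rw [whitneyMu, map_sum, sum_mul]
    exact sum_congr rfl fun S hS => by rw [(mem_filter.1 hS).2]
  have hnonempty : ∀ S ∈ B.powerset, interIn W S ∈ interPosetIn W B ↔ (interIn W S).Nonempty :=
    fun S hS => by simpa [mem_interPosetIn] using fun _ => ⟨S, mem_powerset.1 hS, rfl⟩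
  simp only [whitneyTerm, ← sum_filter]
  rw [poinIn, sum_congr rfl hfibre, sum_fiberwise_eq_sum_filter, filter_congr hnonempty]

lemma poinIn_eq_sum_whitneyTerm {W : Set V} {B : Finset (Set V)} {μ : Set V → ℤ}
    (hμ : IsMobiusIn W B μ) (hW : ∀ K ∈ B, ¬ W ⊆ K) :
    poinIn K W B μ = ∑ S ∈ B.powerset, whitneyTerm K W S := by
  rw [← poinIn_whitneyMu]
  exact sum_congr rfl fun X hX => by rw [hμ.eqOn (isMobiusIn_whitneyMu hW) hX]

lemma poinIn_restrict (H : Set V) (B : Finset (Set V)) (μ : Set V → ℤ) :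
    poinIn K H ((B.image fun K' => H ∩ K').filter fun Y => Y.Nonempty) μ = poinIn K H B μ := by
  simp only [poinIn, interPosetIn_restrict]

lemma whitneyTerm_univ_insert [FiniteDimensional K V] {H : Set V} (hH : IsHyperplane K H)
    {S : Finset (Set V)} (hHS : H ∉ S) :
    whitneyTerm K Set.univ (insert H S) = X * whitneyTerm K H S := by
  rw [whitneyTerm, whitneyTerm, interIn_univ_insert, rkIn_univ_of_subset hH (interIn_subset H S),
    card_insert_of_notMem hHS]
  split_ifs
  · simp only [pow_succ, map_mul, map_neg, map_one]
    ring
  · rw [mul_zero]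

end Poincare

/-- **Deletion–Restriction.** For a finite arrangement `A` of affine
hyperplanes in a finite-dimensional vector space over a field, `H ∈ A`, deletion
`A' = A \ {H}` and restriction `A'' = {H ∩ K : K ∈ A', H ∩ K ≠ ∅}` (an arrangement in
the affine space `H`), the Poincaré polynomials satisfy
`π(A,t) = π(A',t) + t·π(A'',t)`. -/
theorem deletion_restriction {K : Type} [Field K] {V : Type} [AddCommGroup V]
    [Module K V] [FiniteDimensional K V]
    (A : Finset (Set V)) (hA : ∀ H ∈ A, IsHyperplane K H) (H : Set V) (hH : H ∈ A)
    (μ μ' μ'' : Set V → ℤ)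
    (hμ : IsMobiusIn Set.univ A μ)
    (hμ' : IsMobiusIn Set.univ (A.erase H) μ')
    (hμ'' : IsMobiusIn H
      (((A.erase H).image fun K' => H ∩ K').filter fun Y => Y.Nonempty) μ'') :
    poinIn K Set.univ A μ
      = poinIn K Set.univ (A.erase H) μ'
        + Polynomial.X * poinIn K H
            (((A.erase H).image fun K' => H ∩ K').filter fun Y => Y.Nonempty) μ'' := by
  have hAproper : ∀ K' ∈ A, ¬ Set.univ ⊆ K' := fun K' hK' => (hA K' hK').not_univ_subset
  have hA'proper : ∀ K' ∈ A.erase H, ¬ H ⊆ K' := fun K' hK' hHK' =>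
    ne_of_mem_erase hK' ((hA H hH).eq_of_subset (hA K' (mem_of_mem_erase hK')) hHK').symm
  rw [poinIn_restrict, poinIn_eq_sum_whitneyTerm K hμ hAproper,
    poinIn_eq_sum_whitneyTerm K hμ' fun K' hK' => hAproper K' (mem_of_mem_erase hK'),
    poinIn_eq_sum_whitneyTerm K (isMobiusIn_restrict_iff.1 hμ'') hA'proper]
  conv_lhs => rw [← insert_erase hH, sum_powerset_insert (notMem_erase H A)]
  rw [mul_sum]
  refine congrArg _ (sum_congr rfl fun S hS => whitneyTerm_univ_insert K (hA H hH) ?_)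
  exact fun hHS => notMem_erase H A (mem_powerset.1 hS hHS)
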